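/- arXiv:2201.13244 — 4 statements merged into one kernel-verified Lean document; each statement's English description precedes it below -/
import Mathlib

section
/- Let w(x,y) be a word in the free group on two generators, and suppose there is a real constant γ < 1 such that for every finite group X in which w is not an identity, the probability that w(x₁, x₂) = 1 for uniformly random x₁, x₂ ∈ X is at most γ. If m ≤ n are positive integers and a finite group G has the w_{m,n}-property, then either w is an identity in G or |G| ≤ (2/(1-γ))^m · (n-1). -/
/-!
Join `x` to `y` when `w(x, y) ≠ 1` and let `d y` be the degree of `y`. The probability bound
says that the degrees add up to at least `(1 - γ) |G|²`; the `w_{m,n}`-property says that no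
`m`-set has `n` common neighbours. Counting pairs (`m`-set, common neighbour) gives
`∑ C(d y, m) ≤ (n - 1) C(|G|, m)`. Since `(d + 1 - m)^m ≤ m! C(d, m)`, Jensen's inequality for
`t ↦ t^m` yields `|G| ((1 - γ)/2)^m ≤ n - 1` as soon as `m - 1 ≤ (1 - γ) |G| / 2`; otherwise
the bound follows from `m ≤ n` directly.
-/

/-- Evaluation of a word `w ∈ F₂` at a pair of elements of a group. -/
def wEval {G : Type*} [Group G] (w : FreeGroup (Fin 2)) (x y : G) : G :=
  FreeGroup.lift (fun i => if i = 0 then x else y) w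

open Finset

section Relation

variable {α β : Type*} [Fintype β] (r : α → β → Prop) [DecidableRel r]

def commonNeighbors (s : Finset α) : Finset β := {y | ∀ x ∈ s, r x y}

@[simp]
theorem mem_commonNeighbors {s : Finset α} {y : β} : y ∈ commonNeighbors r s ↔ ∀ x ∈ s, r x y := by
  simp [commonNeighbors]

theorem card_commonNeighbors_not_lt_of_forall_exists {m n : ℕ}
    (h : ∀ (M : Finset α) (N : Finset β), #M = m → #N = n → ∃ x ∈ M, ∃ y ∈ N, r x y)
    {s : Finset α} (hs : #s = m) : #(commonNeighbors (fun x y => ¬ r x y) s) < n := by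
  by_contra! hn
  obtain ⟨t, hts, htn⟩ := exists_subset_card_eq hn
  obtain ⟨x, hx, y, hy, hxy⟩ := h s t hs htn
  exact (mem_commonNeighbors _).1 (hts hy) x hx hxy

variable [Fintype α]

theorem card_filter_add_sum_card_filter_not :
    #{p : α × β | r p.1 p.2} + ∑ y, #{x | ¬ r x y} = Fintype.card α * Fintype.card β := by
  have hfibres : #{p : α × β | ¬ r p.1 p.2} = ∑ y, #{x | ¬ r x y} := by
    rw [card_filter, Fintype.sum_prod_type, sum_comm]
    exact sum_congr rfl fun y _ => (card_filter _ _).symm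
  rw [← hfibres, card_filter_add_card_filter_not, card_univ, Fintype.card_prod]

variable [DecidableEq α] {m k : ℕ}

theorem sum_choose_card_filter_le
    (h : ∀ s : Finset α, #s = m → #(commonNeighbors r s) ≤ k) :
    ∑ y, (#{x | r x y}).choose m ≤ k * (Fintype.card α).choose m := by
  let below (y : β) (s : Finset α) : Prop := s ⊆ ({x | r x y} : Finset α)
  calc ∑ y, (#{x | r x y}).choose m
      = ∑ y, #((univ.powersetCard m).bipartiteAbove below y) := by
        refine sum_congr rfl fun y _ => ?_
        rw [← card_powersetCard]
        congr 1
        ext s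
        simp [below, mem_powersetCard, and_comm]
    _ = ∑ s ∈ univ.powersetCard m, #(univ.bipartiteBelow below s) :=
        sum_card_bipartiteAbove_eq_sum_card_bipartiteBelow _
    _ ≤ ∑ _s ∈ univ.powersetCard m, k := by
        refine sum_le_sum fun s hs => le_trans (card_le_card fun y hy => ?_)
          (h s (mem_powersetCard.1 hs).2)
        simp only [below, mem_bipartiteBelow, mem_univ, true_and, mem_commonNeighbors] at hy ⊢
        exact fun x hx => (mem_filter.1 (hy hx)).2
    _ = k * (Fintype.card α).choose m := by
        rw [sum_const, card_powersetCard, card_univ, smul_eq_mul, mul_comm]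

theorem sum_pow_card_filter_le
    (h : ∀ s : Finset α, #s = m → #(commonNeighbors r s) ≤ k) :
    ∑ y, (#{x | r x y} + 1 - m) ^ m ≤ k * Fintype.card α ^ m :=
  calc ∑ y, (#{x | r x y} + 1 - m) ^ m
      ≤ ∑ y, (#{x | r x y}).descFactorial m :=
        sum_le_sum fun y _ => Nat.pow_sub_le_descFactorial _ _
    _ = m.factorial * ∑ y, (#{x | r x y}).choose m := by
        simp only [mul_sum, Nat.descFactorial_eq_factorial_mul_choose]
    _ ≤ m.factorial * (k * (Fintype.card α).choose m) := by
        gcongr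
        exact sum_choose_card_filter_le r h
    _ = k * (Fintype.card α).descFactorial m := by
        rw [Nat.descFactorial_eq_factorial_mul_choose]
        ring
    _ ≤ k * Fintype.card α ^ m := by
        gcongr
        exact Nat.descFactorial_le_pow _ _

end Relation

theorem card_mul_half_pow_le {ι : Type*} [Fintype ι] [Nonempty ι] {d : ι → ℕ} {m k : ℕ}
    {ε : ℝ} (hε : 0 < ε) (hm : 0 < m) (hmk : m - 1 ≤ k) (hd : ∀ y, d y ≤ Fintype.card ι)
    (hsum : ε * Fintype.card ι ^ 2 ≤ ∑ y, (d y : ℝ))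
    (hpow : ∑ y, (d y + 1 - m) ^ m ≤ k * Fintype.card ι ^ m) :
    Fintype.card ι * (ε / 2) ^ m ≤ k := by
  obtain ⟨j, rfl⟩ : ∃ j, m = j + 1 := ⟨m - 1, by omega⟩
  have hjk : (j : ℝ) ≤ k := by exact_mod_cast hmk
  set N : ℝ := (Fintype.card ι : ℝ)
  have hN : 0 < N := by simp only [N]; exact_mod_cast Fintype.card_pos
  have hε1 : ε ≤ 1 := by
    have hdN : ∑ y, (d y : ℝ) ≤ N * N := by
      simpa using sum_le_sum fun y (_ : y ∈ univ) => (Nat.cast_le.2 (hd y) : (d y : ℝ) ≤ N)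
    exact le_of_mul_le_mul_right (by nlinarith : ε * N ^ 2 ≤ 1 * N ^ 2) (by positivity)
  rcases lt_or_ge (ε / 2 * N) j with hsmall | hlarge
  · calc N * (ε / 2) ^ (j + 1) ≤ N * (ε / 2) := by
          gcongr
          exact pow_le_of_le_one (by positivity) (by linarith) (by omega)
      _ ≤ k := by linarith
  set a : ι → ℝ := fun y => ((d y + 1 - (j + 1) : ℕ) : ℝ)
  have ha (y : ι) : (d y : ℝ) - j ≤ a y := by
    have : (d y : ℝ) ≤ ((d y + 1 - (j + 1) : ℕ) : ℝ) + j := by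
      exact_mod_cast (by omega : d y ≤ d y + 1 - (j + 1) + j)
    linarith
  have hmean : ε / 2 * N * N ≤ ∑ y, a y :=
    calc ε / 2 * N * N ≤ ∑ y, (d y : ℝ) - N * j := by nlinarith
      _ = ∑ y, ((d y : ℝ) - j) := by simp [sum_sub_distrib, N]
      _ ≤ ∑ y, a y := sum_le_sum fun y _ => ha y
  have hpow' : ∑ y, a y ^ (j + 1) ≤ k * N ^ (j + 1) := by simp only [a, N]; exact_mod_cast hpow
  have hjensen : (ε / 2 * N * N) ^ (j + 1) ≤ N ^ j * (k * N ^ (j + 1)) :=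
    calc (ε / 2 * N * N) ^ (j + 1) ≤ (∑ y, a y) ^ (j + 1) := by gcongr
      _ ≤ N ^ j * ∑ y, a y ^ (j + 1) := by
        simpa using pow_sum_le_card_mul_sum_pow (s := univ) (fun y _ => Nat.cast_nonneg _) j
      _ ≤ N ^ j * (k * N ^ (j + 1)) := by gcongr
  have hcancel : N * (ε / 2) ^ (j + 1) * (N ^ j * N ^ (j + 1)) ≤ k * (N ^ j * N ^ (j + 1)) := by
    convert hjensen using 1 <;> ring
  exact le_of_mul_le_mul_right hcancel (by positivity)

/-- Main theorem: if the probability that `w(x₁,x₂)=1` is at most `γ < 1` in every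
finite group where `w` is not an identity, and a finite group `G` has the
`w_{m,n}`-property with `m ≤ n`, then either `w` is an identity in `G` or
`|G| ≤ (2/(1-γ))^m * (n-1)`. -/
theorem main_theorem (w : FreeGroup (Fin 2)) (γ : ℝ) (hγ : γ < 1)
    (hprob : ∀ (X : Type) [Group X] [Fintype X] [DecidableEq X],
      (¬ ∀ x y : X, wEval w x y = 1) →
      ((Finset.univ.filter (fun p : X × X => wEval w p.1 p.2 = 1)).card : ℝ)
        ≤ γ * (Fintype.card X : ℝ) ^ 2)
    (m n : ℕ) (hm : 0 < m) (hmn : m ≤ n)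
    (G : Type) [Group G] [Fintype G] [DecidableEq G]
    (hprop : ∀ M N : Finset G, M.card = m → N.card = n →
      ∃ x ∈ M, ∃ y ∈ N, wEval w x y = 1) :
    (∀ x y : G, wEval w x y = 1) ∨
      (Fintype.card G : ℝ) ≤ (2 / (1 - γ)) ^ m * ((n : ℝ) - 1) := by
  by_cases hid : ∀ x y : G, wEval w x y = 1
  · exact Or.inl hid
  right
  have hγ' : 0 < 1 - γ := sub_pos.2 hγ
  have hsolutions := hprob G hid
  have hpairs : #{p : G × G | wEval w p.1 p.2 = 1} + ∑ y : G, #{x : G | ¬ wEval w x y = 1} =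
      Fintype.card G * Fintype.card G :=
    card_filter_add_sum_card_filter_not fun x y => wEval w x y = 1
  have hdegrees : (1 - γ) * Fintype.card G ^ 2 ≤ ∑ y : G, (#{x : G | ¬ wEval w x y = 1} : ℝ) := by
    have := congrArg (Nat.cast : ℕ → ℝ) hpairs
    push_cast at this
    nlinarith
  have hbound := card_mul_half_pow_le hγ' hm (by omega) (fun _ => card_le_univ _)
    hdegrees (sum_pow_card_filter_le (fun x y => ¬ wEval w x y = 1) fun s hs =>
      Nat.le_sub_one_of_lt (card_commonNeighbors_not_lt_of_forall_exists (fun x y => wEval w x y = 1) hprop hs))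
  rw [Nat.cast_sub (by omega), Nat.cast_one] at hbound
  rwa [← inv_div, inv_pow, inv_mul_eq_div, le_div_iff₀ (by positivity)]
end

section
/- If G is a finite non-abelian group, then the number of pairs (x,y) ∈ G × G with xy = yx is at most (5/8)·|G|². -/
/-!
Commuting pairs are counted by centralizers: `#{(x, y) | x y = y x} = ∑ₓ |C(x)|`. A central `x`
contributes `|G|`, a non-central one at most `|G| / 2`, since `C(x)` is then a proper subgroup.
So twice the count is at most `|G| (|G| + |Z(G)|)`. Finally `[G : Z(G)] ≥ 4`: the index is not
`1` as `G` is non-abelian, and it is never prime because `G / Z(G)` cyclic forces `G` abelian.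
-/

namespace Subgroup

variable {G : Type*} [Group G]

theorem not_prime_index_center : ¬ (center G).index.Prime := by
  intro hp
  have : Fact (Nat.card (G ⧸ center G)).Prime := ⟨hp⟩
  have : IsCyclic (G ⧸ center G) := isCyclic_of_prime_card rfl
  have : IsMulCommutative G := isMulCommutative_of_isCyclic_quotient_center_self G
  simp [center_eq_top, Nat.not_prime_one] at hp

theorem four_le_index_center [Finite G] (hG : ¬ IsMulCommutative G) :
    4 ≤ (center G).index := by
  have h0 : (center G).index ≠ 0 := index_ne_zero_of_finite
  have h1 : (center G).index ≠ 1 := by rwa [Ne, index_eq_one, center_eq_top_iff]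
  have hp := not_prime_index_center (G := G)
  by_contra! h
  interval_cases (center G).index
  · exact h0 rfl
  · exact h1 rfl
  · exact hp Nat.prime_two
  · exact hp Nat.prime_three

theorem two_mul_card_le_of_ne_top [Finite G] {H : Subgroup G} (hH : H ≠ ⊤) :
    2 * Nat.card H ≤ Nat.card G := by
  rw [← H.card_mul_index, mul_comm]
  exact Nat.mul_le_mul_left _ (one_lt_index_of_ne_top hH)

theorem two_mul_card_centralizer_le [Finite G] {x : G} (hx : x ∉ center G) :
    2 * Nat.card (centralizer {x}) ≤ Nat.card G :=
  two_mul_card_le_of_ne_top fun h => hx (by simpa using centralizer_eq_top_iff_subset.mp h)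

end Subgroup

open Subgroup

section CommutingPairs

variable (G : Type*) [Group G]

theorem card_commute_eq_sum_card_centralizer [Fintype G] :
    Nat.card {p : G × G // Commute p.1 p.2} = ∑ x : G, Nat.card (centralizer {x}) := by
  rw [Nat.card_congr (Equiv.subtypeProdEquivSigmaSubtype Commute), Nat.card_sigma]
  refine Finset.sum_congr rfl fun x _ => Nat.card_congr (Equiv.subtypeEquivRight fun y => ?_)
  rw [mem_centralizer_singleton_iff]
  exact eq_comm

theorem two_mul_card_commute_le [Finite G] :
    2 * Nat.card {p : G × G // Commute p.1 p.2} ≤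
      Nat.card G * (Nat.card G + Nat.card (center G)) := by
  classical
  have := Fintype.ofFinite G
  calc 2 * Nat.card {p : G × G // Commute p.1 p.2}
      = ∑ x : G, 2 * Nat.card (centralizer {x}) := by
        rw [card_commute_eq_sum_card_centralizer, Finset.mul_sum]
    _ ≤ ∑ x : G, (Nat.card G + if x ∈ center G then Nat.card G else 0) := by
        refine Finset.sum_le_sum fun x _ => ?_
        split_ifs with hx
        · have := (centralizer {x}).card_le_card_group
          omega
        · simpa using two_mul_card_centralizer_le hx
    _ = Nat.card G * (Nat.card G + Nat.card (center G)) := by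
        rw [Finset.sum_add_distrib, Finset.sum_ite, Finset.sum_const_zero]
        simp [Nat.card_eq_fintype_card, Fintype.card_subtype, mul_add, mul_comm]

theorem eight_mul_card_commute_le [Finite G] (hG : ¬ IsMulCommutative G) :
    8 * Nat.card {p : G × G // Commute p.1 p.2} ≤ 5 * Nat.card G ^ 2 := by
  have hpairs := two_mul_card_commute_le G
  have hcenter : 4 * Nat.card (center G) ≤ Nat.card G := by
    rw [← (center G).card_mul_index, mul_comm]
    exact Nat.mul_le_mul_left _ (four_le_index_center hG)
  nlinarith

end CommutingPairs

/-- Gustafson's theorem: a finite non-abelian group has at most `(5/8)·|G|²`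
commuting pairs. -/
theorem gustafson (G : Type*) [Group G] [Fintype G] [DecidableEq G]
    (hnab : ¬ ∀ x y : G, x * y = y * x) :
    ((Finset.univ.filter (fun p : G × G => p.1 * p.2 = p.2 * p.1)).card : ℝ)
      ≤ (5 / 8 : ℝ) * (Fintype.card G : ℝ) ^ 2 := by
  have hG : ¬ IsMulCommutative G := fun h => hnab fun x y => h.is_comm.comm x y
  have hcount : (Finset.univ.filter (fun p : G × G => p.1 * p.2 = p.2 * p.1)).card =
      Nat.card {p : G × G // Commute p.1 p.2} := by
    rw [← Nat.card_eq_finsetCard]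
    exact Nat.card_congr (Equiv.subtypeEquivRight fun p => by simp [commute_iff_eq])
  have hbound : (8 * Nat.card {p : G × G // Commute p.1 p.2} : ℝ) ≤ 5 * Nat.card G ^ 2 := by
    exact_mod_cast eight_mul_card_commute_le G hG
  rw [hcount, ← Nat.card_eq_fintype_card]
  linarith
end

section
/- Assume there exists a constant δ < 1 such that for every finite group X in which the 2-Engel word [x,y,y] is not an identity, the probability that [g₁,g₂,g₂] = 1 for uniformly random g₁, g₂ ∈ X is at most δ. Then, setting τ = 2/(1-δ), for all positive integers m ≤ n and every finite group G with the [x,y,y]_{m,n}-property, either [x,y,y] is an identity in G (i.e., G is 2-Engel) or |G| ≤ τ^m · (n-1). -/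
open scoped commutatorElement
open Finset Function

/-!
Call `y` bad for `x` when `[x, y, y] ≠ 1`, and let `d y` be the number of `x` for which `y` is
bad. The probability bound gives `∑ d y ≥ (1 - δ) |G|²`. For `t : Fin m → G` let `F t` be the set
of `y` bad for every entry of `t`; double counting gives `∑ₜ #(F t) = ∑ d y ^ m`, which the power
mean inequality bounds below by `(1 - δ)^m |G|^(m+1)`. The `[x,y,y]_{m,n}`-property forces
`#(F t) ≤ n - 1` whenever `t` is injective, and the at most `m (m - 1) |G|^(m-1)` non-injective
tuples contribute at most `m (m - 1) |G|^m`. Hence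
`(1 - δ)^m |G| ≤ n - 1 + m (m - 1) ≤ 2^m (n - 1)`.
-/

section Tuples

variable {α : Type*} [Fintype α] [DecidableEq α]

theorem card_filter_apply_eq_apply_le {m : ℕ} {i j : Fin m} (hij : i ≠ j) :
    #{t : Fin m → α | t i = t j} ≤ Fintype.card α ^ (m - 1) := by
  have hrestrict : Set.InjOn (fun (t : Fin m → α) (k : {k // k ≠ i}) => t k)
      ({t : Fin m → α | t i = t j} : Finset _) := by
    intro t₁ h₁ t₂ h₂ heq
    simp only [coe_filter, mem_univ, true_and] at h₁ h₂
    funext k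
    by_cases hk : k = i
    · subst hk
      rw [h₁, h₂]
      exact congrFun heq ⟨j, hij.symm⟩
    · exact congrFun heq ⟨k, hk⟩
  calc #{t : Fin m → α | t i = t j}
      ≤ #(univ : Finset ({k : Fin m // k ≠ i} → α)) :=
        card_le_card_of_injOn _ (fun _ _ => mem_coe.mpr (mem_univ _)) hrestrict
    _ = Fintype.card α ^ (m - 1) := by
        simp [Fintype.card_subtype_compl]

theorem card_filter_not_injective_le (m : ℕ) :
    #{t : Fin m → α | ¬ Injective t} ≤ m * (m - 1) * Fintype.card α ^ (m - 1) := by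
  have hcover : ({t : Fin m → α | ¬ Injective t} : Finset _) ⊆
      (univ : Finset (Fin m)).offDiag.biUnion fun ij => {t : Fin m → α | t ij.1 = t ij.2} := by
    intro t ht
    simp only [Injective, mem_filter, mem_univ, true_and, not_forall] at ht
    obtain ⟨i, j, hij, hne⟩ := ht
    simp only [mem_biUnion, mem_offDiag, mem_filter]
    exact ⟨(i, j), ⟨mem_univ _, mem_univ _, hne⟩, mem_univ _, hij⟩
  calc #{t : Fin m → α | ¬ Injective t}
      ≤ ∑ ij ∈ (univ : Finset (Fin m)).offDiag, #{t : Fin m → α | t ij.1 = t ij.2} :=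
        (card_le_card hcover).trans card_biUnion_le
    _ ≤ ∑ _ij ∈ (univ : Finset (Fin m)).offDiag, Fintype.card α ^ (m - 1) :=
        sum_le_sum fun ij hij => card_filter_apply_eq_apply_le (mem_offDiag.mp hij).2.2
    _ = m * (m - 1) * Fintype.card α ^ (m - 1) := by
        simp [offDiag_card, Nat.mul_sub_one]

end Tuples

section Relation

variable {α : Type*} [Fintype α] (R : α → α → Prop) [DecidableRel R]

def inDegree (y : α) : ℕ := #{x | R x y}

def commonSucc {m : ℕ} (t : Fin m → α) : Finset α := {y | ∀ i, R (t i) y}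

theorem sum_inDegree : ∑ y, inDegree R y = #{p : α × α | R p.1 p.2} := by
  simp only [inDegree, card_filter, Fintype.sum_prod_type]
  exact sum_comm

theorem sum_card_commonSucc (m : ℕ) :
    ∑ t : Fin m → α, #(commonSucc R t) = ∑ y, inDegree R y ^ m := by
  calc ∑ t : Fin m → α, #(commonSucc R t)
      = ∑ y, #{t : Fin m → α | ∀ i, R (t i) y} := by
        simp only [commonSucc, card_filter]
        exact sum_comm
    _ = ∑ y, inDegree R y ^ m := by
        refine sum_congr rfl fun y _ => ?_
        have : ({t : Fin m → α | ∀ i, R (t i) y} : Finset _) =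
            Fintype.piFinset fun _ => ({x | R x y} : Finset α) := by
          ext t; simp [Fintype.mem_piFinset]
        rw [this, Fintype.card_piFinset, prod_const, card_univ, Fintype.card_fin, inDegree]

variable {R}

theorem card_commonSucc_lt_of_forall_exists_not {m n : ℕ}
    (h : ∀ M N : Finset α, #M = m → #N = n → ∃ x ∈ M, ∃ y ∈ N, ¬ R x y)
    {t : Fin m → α} (ht : Injective t) : #(commonSucc R t) < n := by
  classical
  by_contra! hn
  obtain ⟨N, hN, hNn⟩ := exists_subset_card_eq hn
  obtain ⟨x, hx, y, hy, hxy⟩ :=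
    h (univ.image t) N (by simp [card_image_of_injective _ ht]) hNn
  obtain ⟨i, -, rfl⟩ := mem_image.mp hx
  exact hxy ((mem_filter.mp (hN hy)).2 i)

theorem sum_inDegree_pow_le [DecidableEq α] {m k : ℕ}
    (hk : ∀ t : Fin m → α, Injective t → #(commonSucc R t) ≤ k) :
    ∑ y, inDegree R y ^ m ≤ (k + m * (m - 1)) * Fintype.card α ^ m := by
  set q := Fintype.card α
  rw [← sum_card_commonSucc, ← sum_filter_add_sum_filter_not univ Injective, add_mul]
  gcongr
  · calc ∑ t ∈ {t : Fin m → α | Injective t}, #(commonSucc R t)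
        ≤ #{t : Fin m → α | Injective t} * k := by
          simpa using sum_le_card_nsmul _ _ k fun t ht => hk t (mem_filter.mp ht).2
      _ ≤ k * q ^ m := by
          rw [mul_comm]
          exact Nat.mul_le_mul_left k ((card_le_univ _).trans_eq (by simp [q]))
  · calc ∑ t ∈ {t : Fin m → α | ¬ Injective t}, #(commonSucc R t)
        ≤ #{t : Fin m → α | ¬ Injective t} * q := by
          simpa using sum_le_card_nsmul _ _ q fun t _ => card_le_univ (commonSucc R t)
      _ ≤ m * (m - 1) * q ^ (m - 1) * q := Nat.mul_le_mul_right q (card_filter_not_injective_le m)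
      _ ≤ m * (m - 1) * q ^ m := by
          rcases m with _ | m
          · simp
          · simp [mul_assoc, pow_succ]

theorem pow_mul_card_le_of_forall_injective [Nonempty α] [DecidableEq α] {m k : ℕ} (hm : 0 < m)
    {ε : ℝ} (hε : 0 ≤ ε) (hR : ε * Fintype.card α ^ 2 ≤ #{p : α × α | R p.1 p.2})
    (hk : ∀ t : Fin m → α, Injective t → #(commonSucc R t) ≤ k) :
    ε ^ m * Fintype.card α ≤ (k + m * (m - 1) : ℕ) := by
  have hdeg := sum_inDegree_pow_le hk
  set K := k + m * (m - 1)
  obtain ⟨m, rfl⟩ := Nat.exists_eq_add_one_of_ne_zero hm.ne'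
  have hpow : ∑ y, (inDegree R y : ℝ) ^ (m + 1) ≤ K * (Fintype.card α : ℝ) ^ (m + 1) := by
    exact_mod_cast hdeg
  have hsum : ε * Fintype.card α ^ 2 ≤ ∑ y, (inDegree R y : ℝ) := by
    rwa [← Nat.cast_sum, sum_inDegree]
  have hjensen := pow_sum_le_card_mul_sum_pow (s := univ) (f := fun y => (inDegree R y : ℝ))
    (fun _ _ => Nat.cast_nonneg _) m
  rw [card_univ] at hjensen
  set q : ℝ := (Fintype.card α : ℝ)
  have key : ε ^ (m + 1) * q * (q ^ m * q ^ (m + 1)) ≤ K * (q ^ m * q ^ (m + 1)) :=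
    calc ε ^ (m + 1) * q * (q ^ m * q ^ (m + 1)) = (ε * q ^ 2) ^ (m + 1) := by ring
      _ ≤ (∑ y, (inDegree R y : ℝ)) ^ (m + 1) := by gcongr
      _ ≤ q ^ m * ∑ y, (inDegree R y : ℝ) ^ (m + 1) := hjensen
      _ ≤ q ^ m * (K * q ^ (m + 1)) := by gcongr
      _ = K * (q ^ m * q ^ (m + 1)) := by ring
  exact le_of_mul_le_mul_right key (by positivity)

end Relation

theorem sub_one_add_mul_sub_one_le {m n : ℕ} (hm : 0 < m) (hmn : m ≤ n) :
    n - 1 + m * (m - 1) ≤ 2 ^ m * (n - 1) := by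
  have h : m * (m - 1) ≤ (2 ^ m - 1) * (n - 1) :=
    Nat.mul_le_mul (Nat.le_sub_one_of_lt Nat.lt_two_pow_self) (by omega)
  have h2 : 1 ≤ 2 ^ m := Nat.one_le_two_pow
  calc n - 1 + m * (m - 1) ≤ n - 1 + (2 ^ m - 1) * (n - 1) := by omega
    _ = 2 ^ m * (n - 1) := by
      rw [Nat.sub_one_mul]
      have := Nat.le_mul_of_pos_left (n - 1) h2
      omega

/-- Corollary for the 2-Engel word `[x,y,y]`: with `τ = 2/(1-δ)`, if `m ≤ n` and a
finite group `G` has the `[x,y,y]_{m,n}`-property, then either `[x,y,y]` is an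
identity in `G` or `|G| ≤ τ^m · (n-1)`. -/
theorem engel_corollary (δ : ℝ) (hδ : δ < 1)
    (hprob : ∀ (X : Type) [Group X] [Fintype X] [DecidableEq X],
      (¬ ∀ x y : X, ⁅⁅x, y⁆, y⁆ = 1) →
      ((Finset.univ.filter (fun p : X × X => ⁅⁅p.1, p.2⁆, p.2⁆ = 1)).card : ℝ)
        ≤ δ * (Fintype.card X : ℝ) ^ 2) :
    ∀ (m n : ℕ), 0 < m → m ≤ n →
      ∀ (G : Type) [Group G] [Fintype G] [DecidableEq G],
        (∀ M N : Finset G, M.card = m → N.card = n →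
          ∃ x ∈ M, ∃ y ∈ N, ⁅⁅x, y⁆, y⁆ = 1) →
        (∀ x y : G, ⁅⁅x, y⁆, y⁆ = 1) ∨
          (Fintype.card G : ℝ) ≤ (2 / (1 - δ)) ^ m * ((n : ℝ) - 1) := by
  intro m n hm hmn G _ _ _ hprop
  by_cases hE : ∀ x y : G, ⁅⁅x, y⁆, y⁆ = 1
  · exact Or.inl hE
  right
  have hpairs : (1 - δ) * (Fintype.card G : ℝ) ^ 2 ≤ #{p : G × G | ⁅⁅p.1, p.2⁆, p.2⁆ ≠ 1} := by
    have hsplit := card_filter_add_card_filter_not (s := univ)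
      (fun p : G × G => ⁅⁅p.1, p.2⁆, p.2⁆ = 1)
    rw [card_univ, Fintype.card_prod, ← sq] at hsplit
    have := hprob G hE
    rw [← Nat.cast_inj (R := ℝ)] at hsplit
    push_cast at hsplit
    linarith
  have hcommon : ∀ t : Fin m → G, Injective t →
      #(commonSucc (fun x y : G => ⁅⁅x, y⁆, y⁆ ≠ 1) t) ≤ n - 1 := fun t ht =>
    Nat.le_sub_one_of_lt (card_commonSucc_lt_of_forall_exists_not (by simpa using hprop) ht)
  have key := pow_mul_card_le_of_forall_injective (R := fun x y : G => ⁅⁅x, y⁆, y⁆ ≠ 1)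
    hm (sub_nonneg.mpr hδ.le) hpairs hcommon
  have hcoef : ((n - 1 + m * (m - 1) : ℕ) : ℝ) ≤ 2 ^ m * ((n : ℝ) - 1) := by
    have h : ((n - 1 + m * (m - 1) : ℕ) : ℝ) ≤ ((2 ^ m * (n - 1) : ℕ) : ℝ) := by
      exact_mod_cast sub_one_add_mul_sub_one_le hm hmn
    rwa [Nat.cast_mul, Nat.cast_pow, Nat.cast_pred (hm.trans_le hmn), Nat.cast_ofNat] at h
  rw [div_pow, div_mul_eq_mul_div, le_div_iff₀ (pow_pos (by linarith) m)]
  linarith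
end

section
/- Let G be a finite group and m ≤ n positive integers. Suppose that for every pair of subsets M, N ⊆ G with |M| = m, |N| = n, some x ∈ M commutes with some y ∈ N. If |G| > (16/3)^m · (n-1), then G is abelian. -/
/-!
Suppose `a` is not central and grow `M` from `{a}`, tracking the set `noncommutant M` of elements
commuting with no element of `M`. Its elements are noncentral, so each has a centralizer of index
at least `2` and fails to commute with at least half of `G`. So on average an `x ∈ G` fails to
commute with at least half of `noncommutant M`, and as long as `|M| ≤ 5|G|/13` this forces some
`x ∉ M` failing to commute with at least `3/16` of it. After `m` steps `noncommutant M` has at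
least `(3/16)^m |G| > n - 1` elements, hence contains an `n`-set none of whose elements commutes
with an element of the `m`-set `M`.
-/

open Finset

section

open scoped Classical

variable {G : Type*} [Group G] [Fintype G]

noncomputable def noncommutant (M : Finset G) : Finset G := {y | ∀ x ∈ M, ¬Commute x y}

lemma mem_noncommutant {M : Finset G} {y : G} :
    y ∈ noncommutant M ↔ ∀ x ∈ M, ¬Commute x y := by
  simp [noncommutant]

lemma noncommutant_insert (x : G) (M : Finset G) :
    noncommutant (insert x M) = {y ∈ noncommutant M | ¬Commute x y} := by
  ext y
  simp only [mem_filter, mem_noncommutant, forall_mem_insert]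
  tauto

lemma noncommutant_singleton (x : G) : noncommutant {x} = ({y | ¬Commute y x} : Finset G) := by
  ext y
  simp [mem_noncommutant, Commute.symm_iff]

lemma card_le_two_mul_card_not_commute {y : G} (hy : ∃ z, ¬Commute z y) :
    Fintype.card G ≤ 2 * #{x | ¬Commute x y} := by
  set C := Subgroup.centralizer ({y} : Set G)
  have hC : #{x | Commute x y} = Nat.card C := by
    rw [Nat.card_eq_fintype_card, ← Fintype.card_subtype]
    exact Fintype.card_congr (Equiv.subtypeEquivRight fun x =>
      Subgroup.mem_centralizer_singleton_iff.symm)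
  have hC_ne_top : C ≠ ⊤ := by
    obtain ⟨z, hz⟩ := hy
    exact fun h =>
      hz (Subgroup.mem_centralizer_singleton_iff.1 (show z ∈ C from h ▸ Subgroup.mem_top z))
  have hC_half : Nat.card C * 2 ≤ Nat.card G :=
    C.card_mul_index ▸ Nat.mul_le_mul_left _ (Subgroup.one_lt_index_of_ne_top hC_ne_top)
  have hsplit := card_filter_add_card_filter_not (s := univ) fun x : G => Commute x y
  rw [card_univ, hC] at hsplit
  rw [Nat.card_eq_fintype_card (α := G)] at hC_half
  omega

lemma exists_notMem_three_mul_card_le (V P : Finset G) (hV : ∀ y ∈ V, ∃ z, ¬Commute z y)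
    (hP : 13 * #P ≤ 5 * Fintype.card G) :
    ∃ x ∉ P, 3 * #V ≤ 16 * #{y ∈ V | ¬Commute x y} := by
  set f : G → ℕ := fun x => #{y ∈ V | ¬Commute x y}
  have hdouble : ∑ x, f x = ∑ y ∈ V, #{x | ¬Commute x y} :=
    sum_card_bipartiteAbove_eq_sum_card_bipartiteBelow (fun x y => ¬Commute x y)
  have hsum : #V * Fintype.card G ≤ 2 * ∑ x, f x := by
    rw [hdouble, mul_sum, ← smul_eq_mul, ← sum_const]
    exact sum_le_sum fun y hy => card_le_two_mul_card_not_commute (hV y hy)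
  have hP_sum : ∑ x ∈ P, f x ≤ #P * #V := by
    simpa using sum_le_sum fun x (_ : x ∈ P) => card_filter_le V fun y => ¬Commute x y
  have hsplit := sum_sdiff (subset_univ P) (f := f)
  have hcard := card_sdiff_add_card_eq_card (subset_univ P)
  rw [card_univ] at hcard
  have hnonempty : (univ \ P).Nonempty := by
    rw [← card_pos]
    have := Fintype.card_pos (α := G)
    omega
  have hkey : ∑ _x ∈ univ \ P, 3 * #V ≤ ∑ x ∈ univ \ P, 16 * f x := by
    rw [sum_const, smul_eq_mul, ← mul_sum]
    have := Nat.mul_le_mul_left #V (show 8 * #P ≤ 5 * #(univ \ P) by omega)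
    rw [← hcard, mul_add] at hsum
    linarith
  obtain ⟨x, hx, hfx⟩ := exists_le_of_sum_le hnonempty hkey
  exact ⟨x, (mem_sdiff.1 hx).2, hfx⟩

lemma exists_card_eq_card_le_pow_mul_card_noncommutant (hG : ¬∀ a b : G, Commute a b) :
    ∀ k, 1 ≤ k → 13 * (k - 1) ≤ 5 * Fintype.card G →
      ∃ M : Finset G, #M = k ∧ (Fintype.card G : ℝ) ≤ (16 / 3) ^ k * #(noncommutant M) := by
  push Not at hG
  obtain ⟨a, b, hab⟩ := hG
  refine Nat.le_induction (fun _ => ⟨{a}, card_singleton a, ?_⟩) fun k hk ih hk' => ?_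
  · have := card_le_two_mul_card_not_commute (y := a) ⟨b, fun h => hab h.symm⟩
    rw [noncommutant_singleton, pow_one]
    have : (Fintype.card G : ℝ) ≤ 2 * #{x | ¬Commute x a} := by exact_mod_cast this
    linarith
  · obtain ⟨M, hM, hMV⟩ := ih (by omega)
    have hV : ∀ y ∈ noncommutant M, ∃ z, ¬Commute z y := by
      obtain ⟨x, hx⟩ := card_pos.1 (hM ▸ hk)
      exact fun y hy => ⟨x, mem_noncommutant.1 hy x hx⟩
    obtain ⟨x, hxM, hx⟩ := exists_notMem_three_mul_card_le _ M hV (by omega)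
    refine ⟨insert x M, by rw [card_insert_of_notMem hxM, hM], ?_⟩
    rw [noncommutant_insert]
    have hx' : (#(noncommutant M) : ℝ) ≤ 16 / 3 * #{y ∈ noncommutant M | ¬Commute x y} := by
      have : (3 * #(noncommutant M) : ℝ) ≤ 16 * #{y ∈ noncommutant M | ¬Commute x y} := by
        exact_mod_cast hx
      linarith
    calc (Fintype.card G : ℝ) ≤ (16 / 3) ^ k * #(noncommutant M) := hMV
      _ ≤ (16 / 3) ^ k * (16 / 3 * #{y ∈ noncommutant M | ¬Commute x y}) := by gcongr
      _ = _ := by ring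

lemma thirteen_mul_sub_one_le {m n N : ℕ} (hmn : m ≤ n)
    (hbig : (16 / 3 : ℝ) ^ m * ((n : ℝ) - 1) < N) : 13 * (m - 1) ≤ 5 * N := by
  rcases le_or_gt m 1 with hm | hm
  · simp [Nat.sub_eq_zero_of_le hm]
  have hn : (1 : ℝ) ≤ n - 1 := by
    have : (2 : ℝ) ≤ n := by exact_mod_cast hm.trans_le hmn
    linarith
  have hpow : (16 / 3 : ℝ) ^ m < N := by nlinarith [pow_pos (by norm_num : (0 : ℝ) < 16 / 3) m]
  have hbernoulli := one_add_mul_le_pow (a := (13 / 3 : ℝ)) (by norm_num) m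
  norm_num at hbernoulli
  rw [← Nat.cast_le (α := ℝ)]
  push_cast [Nat.cast_sub hm.le]
  linarith

end

theorem neumann_contrapositive_general (G : Type*) [Group G] [Fintype G]
    (m n : ℕ) (hm : 0 < m) (hmn : m ≤ n)
    (hprop : ∀ M N : Finset G, M.card = m → N.card = n →
      ∃ x ∈ M, ∃ y ∈ N, x * y = y * x)
    (hbig : (16 / 3 : ℝ) ^ m * ((n : ℝ) - 1) < (Fintype.card G : ℝ)) :
    ∀ x y : G, x * y = y * x := by
  by_contra hG
  obtain ⟨M, hM, hMV⟩ :=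
    exists_card_eq_card_le_pow_mul_card_noncommutant hG m hm (thirteen_mul_sub_one_le hmn hbig)
  have hn : n ≤ #(noncommutant M) := by
    have := lt_of_mul_lt_mul_left (hbig.trans_le hMV) (by positivity)
    exact Nat.lt_add_one_iff.1 (by exact_mod_cast sub_lt_iff_lt_add.1 this)
  obtain ⟨N, hNV, hN⟩ := exists_subset_card_eq hn
  obtain ⟨x, hx, y, hy, hxy⟩ := hprop M N hM hN
  exact mem_noncommutant.1 (hNV hy) x hx hxy

/-- Contrapositive form: if any `m`-set and `n`-set contain a commuting pair
(`m ≤ n`) and `|G| > (16/3)^m · (n-1)`, then `G` is abelian. -/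
theorem neumann_contrapositive (G : Type*) [Group G] [Fintype G] [DecidableEq G]
    (m n : ℕ) (hm : 0 < m) (hmn : m ≤ n)
    (hprop : ∀ M N : Finset G, M.card = m → N.card = n →
      ∃ x ∈ M, ∃ y ∈ N, x * y = y * x)
    (hbig : (16 / 3 : ℝ) ^ m * ((n : ℝ) - 1) < (Fintype.card G : ℝ)) :
    ∀ x y : G, x * y = y * x :=
  neumann_contrapositive_general G m n hm hmn hprop hbig
end
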